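/- Let S be a finite commutative semigroup and let g_1,…,g_t ∈ S (not necessarily distinct) be such that the cyclic subsemigroup generated by g_1 + ⋯ + g_t is a group. Set e = e(g_1) + ⋯ + e(g_t). Then the Green class H_e is a group with identity element e, and for every subset I ⊆ {1,…,t} one has Σ_{i∈I} g_i + Σ_{j∉I} e(g_j) ∈ H_e. -/
import Mathlib


namespace ZS

variable (S : Type*) [AddCommSemigroup S]

/-- `nsmul' n x = (n+1)·x`, iterated addition in a semigroup. -/
def nsmul' : ℕ → S → S
  | 0, x => x
  | n + 1, x => x + nsmul' n x

/-- The cyclic subsemigroup `⟨x⟩ = {x, 2x, 3x, …}` generated by `x`. -/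
def cyc (x : S) : Set S := Set.range fun n => nsmul' S n x

/-- `x` is periodic if `⟨x⟩` is finite. -/
def IsPeriodicElem (x : S) : Prop := (cyc S x).Finite

/-- A semigroup is periodic if every element is periodic. -/
def IsPeriodicSemigroup : Prop := ∀ x : S, IsPeriodicElem S x

/-- `ρ(x)`: the least `m ≥ 1` such that `m·x` is idempotent (equivalently `m·x = e(x)`). -/
noncomputable def rho (x : S) : ℕ :=
  sInf {n : ℕ | nsmul' S n x + nsmul' S n x = nsmul' S n x} + 1

/-- `e(x)`: the unique idempotent of the finite cyclic semigroup `⟨x⟩`. -/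
noncomputable def eIdem (x : S) : S :=
  nsmul' S (sInf {n : ℕ | nsmul' S n x + nsmul' S n x = nsmul' S n x}) x

/-- The period of a (periodic) element `x`: the least `n > 0` with `(m+n)x = mx` for some `m`. -/
noncomputable def period (x : S) : ℕ :=
  sInf {n : ℕ | 0 < n ∧ ∃ m : ℕ, nsmul' S (m + n) x = nsmul' S m x}

/-- The index of a (periodic) element `x`: the least `k ≥ 1` with `kx = tx` for some `t ≠ k`. -/
noncomputable def indexOf (x : S) : ℕ :=
  sInf {k : ℕ | ∃ t : ℕ, t ≠ k ∧ nsmul' S k x = nsmul' S t x} + 1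

/-- `exp(S)`: the lcm of the periods of the elements of `S`, described as the least positive
common multiple of all the periods. -/
noncomputable def expS : ℕ := sInf {n : ℕ | 0 < n ∧ ∀ x : S, period S x ∣ n}

/-- `K` is a splitting field for exponent `n`: it contains exactly `n` `n`-th roots of unity. -/
def SplitField (K : Type*) [Field K] (n : ℕ) : Prop := Set.ncard {ζ : K | ζ ^ n = 1} = n

/-- Green's preorder `a ≼_𝓗 b`. -/
def gLe (a b : S) : Prop := a = b ∨ ∃ c : S, a = b + c

/-- Green's congruence `a 𝓗 b`. -/
def gEq (a b : S) : Prop := gLe S a b ∧ gLe S b a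

/-- `a ≺_𝓗 b`. -/
def gLt (a b : S) : Prop := gLe S a b ∧ ¬ gLe S b a

/-- The Green class `H_a`. -/
def HClass (a : S) : Set S := {x : S | gEq S x a}

/-- The stabilizer `St(H_a)` of the Green class of `a`. -/
def stab (a : S) : Set S := {c : S | ∀ x ∈ HClass S a, c + x ∈ HClass S a}

theorem gLe_trans {a b c : S} (h1 : gLe S a b) (h2 : gLe S b c) : gLe S a c := by
  rcases h1 with rfl | ⟨u, rfl⟩
  · exact h2
  · rcases h2 with rfl | ⟨v, rfl⟩
    · exact Or.inr ⟨u, rfl⟩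
    · exact Or.inr ⟨v + u, by rw [add_assoc]⟩

theorem gLe_add_right {a b : S} (x : S) (h : gLe S a b) : gLe S (a + x) (b + x) := by
  rcases h with rfl | ⟨c, rfl⟩
  · exact Or.inl rfl
  · exact Or.inr ⟨c, by rw [add_right_comm]⟩

theorem gEq_add {w x y z : S} (h1 : gEq S w x) (h2 : gEq S y z) : gEq S (w + y) (x + z) := by
  have k1 : gLe S (w + y) (x + y) := gLe_add_right S y h1.1
  have k2 : gLe S (x + y) (x + z) := by
    have h := gLe_add_right S x h2.1
    rwa [add_comm z x, add_comm y x] at h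
  have k3 : gLe S (x + z) (w + z) := gLe_add_right S z h1.2
  have k4 : gLe S (w + z) (w + y) := by
    have h := gLe_add_right S w h2.2
    rwa [add_comm z w, add_comm y w] at h
  exact ⟨gLe_trans S k1 k2, gLe_trans S k3 k4⟩

/-- Green's congruence as an additive congruence. -/
def greenCon : AddCon S where
  r a b := gEq S a b
  iseqv := ⟨fun _ => ⟨Or.inl rfl, Or.inl rfl⟩, fun h => ⟨h.2, h.1⟩,
    fun h1 h2 => ⟨gLe_trans S h1.1 h2.1, gLe_trans S h2.2 h1.2⟩⟩
  add' h1 h2 := gEq_add S h1 h2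

/-- The quotient semigroup `S/𝓗`. -/
abbrev GQuot := (greenCon S).Quotient

/-- The canonical epimorphism `S → S/𝓗`, `a ↦ ā`. -/
def gq (a : S) : GQuot S := (a : (greenCon S).Quotient)

/-- The sum of a sequence (multiset) of elements of `S`, computed in `WithZero S`
(the empty sequence having sum the adjoined zero). -/
def msum (T : Multiset S) : WithZero S := (T.map fun x => (x : WithZero S)).sum

/-- A sequence over a commutative semigroup is (additively) reducible if some proper
(possibly empty) subsequence has the same sum; the empty sequence has sum the identity of `S`,
when `S` has one. -/
def IsReducible (T : Multiset S) : Prop :=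
  (∃ T' : Multiset S, T' ≤ T ∧ T' ≠ T ∧ T' ≠ 0 ∧ msum S T' = msum S T) ∨
    (T ≠ 0 ∧ ∃ z : S, msum S T = ↑z ∧ ∀ s : S, z + s = s)

/-- The Davenport constant `D(S)` of a commutative semigroup. -/
noncomputable def Dav : ℕ∞ :=
  sInf {n : ℕ∞ | ∀ T : Multiset S, (T.card : ℕ∞) ≥ n → IsReducible S T}

/-- The relative Davenport constant `D_a(S)`: the largest length of an additively
irreducible sequence with sum `a`. -/
noncomputable def Drel (a : S) : ℕ∞ :=
  sSup {n : ℕ∞ | ∃ T : Multiset S,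
    T ≠ 0 ∧ ¬ IsReducible S T ∧ msum S T = ↑a ∧ n = (T.card : ℕ∞)}

/-- The Erdős–Burgess constant `I(S)`: the smallest `ℓ` such that every sequence over `S` of
length (at least) `ℓ` has a nonempty subsequence with idempotent sum. -/
noncomputable def EB : ℕ∞ :=
  sInf {n : ℕ∞ | ∀ T : Multiset S, (T.card : ℕ∞) ≥ n →
    ∃ T' : Multiset S, T' ≤ T ∧ T' ≠ 0 ∧ ∃ x : S, msum S T' = ↑x ∧ x + x = x}

/-- The Davenport constant of a (semigroup which is a) group: the smallest `ℓ` such that every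
sequence of length (at least) `ℓ` has a nonempty subsequence whose sum is the identity element. -/
noncomputable def DavGrpSet : ℕ∞ :=
  sInf {n : ℕ∞ | ∀ T : Multiset S, (T.card : ℕ∞) ≥ n →
    ∃ T' : Multiset S, T' ≤ T ∧ T' ≠ 0 ∧ ∃ z : S, msum S T' = ↑z ∧ ∀ x : S, z + x = x}

/-- The Davenport constant of a finite abelian group. -/
noncomputable def DavG (G : Type*) [AddCommMonoid G] : ℕ∞ :=
  sInf {n : ℕ∞ | ∀ T : Multiset G, (T.card : ℕ∞) ≥ n →
    ∃ T' : Multiset G, T' ≤ T ∧ T' ≠ 0 ∧ T'.sum = 0}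

/-- `ψ(a)`: the largest length of a strictly ascending chain of principal ideals starting at
`(a)`. -/
noncomputable def psi (a : S) : ℕ∞ :=
  sSup {n : ℕ∞ | ∃ ℓ : ℕ, n = (ℓ : ℕ∞) ∧
    ∃ c : ℕ → S, c 0 = a ∧ ∀ i < ℓ, gLt S (c i) (c (i + 1))}

/-- `Ψ(S)`: the largest length of a strictly ascending chain of principal ideals of `S`. -/
noncomputable def PsiS : ℕ∞ := ⨆ a : S, psi S a

/-- A subset of a semigroup which is a subgroup: closed under addition, with an identity
and inverses. -/
def IsSubgroupSet (T : Set S) : Prop :=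
  (∀ x ∈ T, ∀ y ∈ T, x + y ∈ T) ∧
    ∃ z ∈ T, (∀ x ∈ T, z + x = x) ∧ ∀ x ∈ T, ∃ y ∈ T, x + y = z

open Classical in
/-- `ε_a`: `0` if `⟨a⟩` is a group, `1` otherwise. -/
noncomputable def eps (a : S) : ℕ∞ := if IsSubgroupSet S (cyc S a) then 0 else 1

/-- The Schützenberger maps on the Green class `H_a`: maps `x ↦ c + x` for `c ∈ St(H_a)`. -/
def GammaSet (a : S) : Set (↥(HClass S a) → ↥(HClass S a)) :=
  {f | ∃ c ∈ stab S a, ∀ x : ↥(HClass S a), (↑(f x) : S) = c + ↑x}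

/-- The Schützenberger group `Γ(H_a)` (as a type; it is empty when `St(H_a) = ∅`). -/
def Gamma (a : S) : Type _ := ↥(GammaSet S a)

instance (a : S) : Add (Gamma S a) :=
  ⟨fun f g => ⟨f.1 ∘ g.1, by
    obtain ⟨c, hc, hfc⟩ := f.2
    obtain ⟨d, hd, hgd⟩ := g.2
    refine ⟨c + d, fun x hx => by rw [add_assoc]; exact hc _ (hd x hx), fun x => ?_⟩
    show (↑(f.1 (g.1 x)) : S) = c + d + ↑x
    rw [hfc (g.1 x), hgd x, add_assoc]⟩⟩

instance (a : S) : AddCommSemigroup (Gamma S a) where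
  add_assoc f g h := Subtype.ext rfl
  add_comm f g := by
    obtain ⟨c, hc, hfc⟩ := f.2
    obtain ⟨d, hd, hgd⟩ := g.2
    apply Subtype.ext
    funext x
    apply Subtype.ext
    show (↑(f.1 (g.1 x)) : S) = ↑(g.1 (f.1 x))
    rw [hfc (g.1 x), hgd x, hgd (f.1 x), hfc x, add_left_comm]

/-- `St(H_a)` as a subsemigroup of `S`. -/
def stabSub (a : S) : AddSubsemigroup S where
  carrier := stab S a
  add_mem' := fun {c d} hc hd x hx => by rw [add_assoc]; exact hc _ (hd x hx)

/-- The canonical surjection `π_a : St(H_a) → Γ(H_a)`, `c ↦ γ_c`. -/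
def gammaMap (a : S) (c : ↥(stabSub S a)) : Gamma S a :=
  ⟨fun x => ⟨(↑c : S) + ↑x, c.2 ↑x x.2⟩, ⟨↑c, c.2, fun _ => rfl⟩⟩

/-- The semigroup algebra `R[X;S]` of a commutative semigroup, realized inside the monoid
algebra of the monoid obtained from `S` by adjoining an identity element. -/
abbrev SAlg (R : Type*) [CommRing R] (S : Type*) [AddCommSemigroup S] :=
  AddMonoidAlgebra R (WithZero S)

/-- The monomial `r·X^s` of the semigroup algebra. -/
noncomputable def Xm (R : Type*) [CommRing R] {S : Type*} [AddCommSemigroup S] (s : S) (r : R) :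
    SAlg R S := AddMonoidAlgebra.single (↑s) r

/-- The factor `X^s - a·X^{e(s)}` of the semigroup algebra. -/
noncomputable def facX (R : Type*) [CommRing R] {S : Type*} [AddCommSemigroup S]
    (s : S) (a : R) : SAlg R S := Xm R s 1 - Xm R (eIdem S s) a

/-- The invariant `d(S,R)`: the supremum of all `ℓ` such that some sequence `s_1,…,s_ℓ` over
`S` satisfies `(X^{s_1} - a_1 X^{e(s_1)}) ⋯ (X^{s_ℓ} - a_ℓ X^{e(s_ℓ)}) ≠ 0` in `R[X;S]` for all
nonzero `a_1, …, a_ℓ ∈ R`. -/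
noncomputable def dd (R : Type*) [CommRing R] (S : Type*) [AddCommSemigroup S] : ℕ∞ :=
  sSup {n : ℕ∞ | ∃ ℓ : ℕ, n = (ℓ : ℕ∞) ∧ ∃ s : Fin ℓ → S,
    ∀ a : Fin ℓ → R, (∀ i, a i ≠ 0) → ∏ i, facX R (s i) (a i) ≠ 0}

/-- `Λ(S)`: the minimum over all generating sets `A` of `S` of `1 + Σ_{a∈A} (ρ(a)-1)`. -/
noncomputable def Lam (S : Type*) [AddCommSemigroup S] : ℕ :=
  sInf {n : ℕ | ∃ A : Finset S,
    AddSubsemigroup.closure (↑A : Set S) = ⊤ ∧ n = 1 + ∑ a ∈ A, (rho S a - 1)}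

/-- An elementary semigroup: an ideal extension of a nilsemigroup `N` by a group with zero
`G ∪ {∞}`. -/
def IsElementary : Prop :=
  ∃ G N : Set S, G ∪ N = Set.univ ∧ Disjoint G N ∧ IsSubgroupSet S G ∧
    (∀ x ∈ N, ∀ s : S, s + x ∈ N) ∧
    ∃ z ∈ N, (∀ s : S, s + z = z) ∧ ∀ x ∈ N, ∃ n : ℕ, nsmul' S n x = z



/-! ### Auxiliary lemmas for Statement 15 -/

theorem nsmul'_succ (n : ℕ) (x : S) : nsmul' S (n + 1) x = x + nsmul' S n x := rfl

theorem nsmul'_add (a b : ℕ) (x : S) :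
    nsmul' S (a + b + 1) x = nsmul' S a x + nsmul' S b x := by
  induction a with
  | zero => rw [Nat.zero_add]; rfl
  | succ a ih =>
    have h : a + 1 + b + 1 = (a + b + 1) + 1 := by omega
    rw [h, nsmul'_succ, ih, nsmul'_succ, add_assoc]

theorem nsmul'_pump (x : S) (m : ℕ)
    (h : nsmul' S m x + nsmul' S m x = nsmul' S m x) (k : ℕ) :
    nsmul' S (k * (m + 1) + m) x = nsmul' S m x := by
  induction k with
  | zero => rw [Nat.zero_mul, Nat.zero_add]
  | succ k ih =>
    have h2 : (k + 1) * (m + 1) + m = m + (k * (m + 1) + m) + 1 := by ring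
    rw [h2, nsmul'_add, ih, h]

theorem idem_unique (x : S) (p q : ℕ)
    (hp : nsmul' S p x + nsmul' S p x = nsmul' S p x)
    (hq : nsmul' S q x + nsmul' S q x = nsmul' S q x) :
    nsmul' S p x = nsmul' S q x := by
  have h1 := nsmul'_pump S x p hp q
  have h2 := nsmul'_pump S x q hq p
  have h3 : q * (p + 1) + p = p * (q + 1) + q := by ring
  rw [← h1, h3, h2]

theorem exists_idem [Finite S] (x : S) :
    ∃ m, nsmul' S m x + nsmul' S m x = nsmul' S m x := by
  obtain ⟨a, b, hab, heq⟩ := Finite.exists_ne_map_eq_of_infinite (fun n => nsmul' S n x)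
  obtain ⟨i, p, hp, key⟩ : ∃ i p, 0 < p ∧ nsmul' S (i + p) x = nsmul' S i x := by
    rcases Nat.lt_or_ge a b with h | h
    · exact ⟨a, b - a, by omega, by simpa [Nat.add_sub_cancel' h.le] using heq.symm⟩
    · have h' : b < a := lt_of_le_of_ne h (Ne.symm hab)
      exact ⟨b, a - b, by omega, by simpa [Nat.add_sub_cancel' h'.le] using heq⟩
  have Q : ∀ u, nsmul' S (i + u + p) x = nsmul' S (i + u) x := by
    intro u
    induction u with
    | zero => simpa using key
    | succ u ih =>
      have h1 : i + (u + 1) + p = (i + u + p) + 1 := by omega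
      have h2 : i + (u + 1) = (i + u) + 1 := by omega
      rw [h1, h2, nsmul'_succ, nsmul'_succ, ih]
  have R : ∀ k u, nsmul' S (i + u + k * p) x = nsmul' S (i + u) x := by
    intro k
    induction k with
    | zero => intro u; rw [Nat.zero_mul, Nat.add_zero]
    | succ k ih =>
      intro u
      have h1 : i + u + (k + 1) * p = i + (u + k * p) + p := by ring
      rw [h1, Q, ← Nat.add_assoc, ih]
  set L := (i + 1) * p with hL
  have hLi : i + 1 ≤ L := Nat.le_mul_of_pos_right _ hp
  refine ⟨L - 1, ?_⟩
  rw [← nsmul'_add]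
  have h1 : L - 1 + (L - 1) + 1 = i + (L - 1 - i) + (i + 1) * p := by omega
  rw [h1, R (i + 1) (L - 1 - i)]
  congr 1
  omega

theorem eIdem_spec [Finite S] (x : S) :
    ∃ m, eIdem S x = nsmul' S m x ∧ eIdem S x + eIdem S x = eIdem S x := by
  have h := Nat.sInf_mem (exists_idem S x)
  exact ⟨_, rfl, h⟩

theorem eIdem_idem [Finite S] (x : S) : eIdem S x + eIdem S x = eIdem S x :=
  (eIdem_spec S x).choose_spec.2

theorem exists_common [Finite S] {t : ℕ} (g : Fin t → S) :
    ∃ N : ℕ, ∀ i, nsmul' S (N + 1) (g i) = eIdem S (g i) := by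
  choose m hm hid using fun i => eIdem_spec S (g i)
  set P : ℕ := ∏ i, (m i + 1) with hP
  have hP1 : 1 ≤ P := Nat.one_le_iff_ne_zero.mpr (by positivity)
  refine ⟨2 * P - 2, fun i => ?_⟩
  have hdvd : (m i + 1) ∣ 2 * P :=
    Dvd.dvd.mul_left (Finset.dvd_prod_of_mem _ (Finset.mem_univ i)) 2
  obtain ⟨c, hc⟩ := hdvd
  have hc1 : 1 ≤ c := by
    rcases Nat.eq_zero_or_pos c with h | h
    · subst h; simp at hc; omega
    · exact h
  obtain ⟨d, rfl⟩ : ∃ d, c = d + 1 := ⟨c - 1, by omega⟩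
  have hexp : 2 * P = d * (m i + 1) + (m i + 1) := by rw [hc]; ring
  have hidm : nsmul' S (m i) (g i) + nsmul' S (m i) (g i) = nsmul' S (m i) (g i) := by
    rw [← hm i]; exact hid i
  have h1 : 2 * P - 2 + 1 = d * (m i + 1) + m i := by omega
  rw [h1, nsmul'_pump S (g i) (m i) hidm d, hm i]

theorem exists_coe_sum {ι : Type*} (J : Finset ι) (hJ : J.Nonempty) (f : ι → S) :
    ∃ v : S, ∑ i ∈ J, (↑(f i) : WithZero S) = ↑v := by
  classical
  induction J using Finset.cons_induction with
  | empty => exact absurd hJ (by simp)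
  | cons a J ha ih =>
    rw [Finset.sum_cons]
    rcases J.eq_empty_or_nonempty with rfl | hJ'
    · exact ⟨f a, by simp⟩
    · obtain ⟨v, hv⟩ := ih hJ'
      exact ⟨f a + v, by rw [hv, WithZero.coe_add]⟩

theorem coe_sum_nsmul' {ι : Type*} (J : Finset ι) (f : ι → S) (w : S) (n : ℕ)
    (hw : ∑ i ∈ J, (↑(f i) : WithZero S) = ↑w) :
    ∑ i ∈ J, (↑(nsmul' S n (f i)) : WithZero S) = ↑(nsmul' S n w) := by
  induction n with
  | zero => exact hw
  | succ n ih =>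
    show ∑ i ∈ J, (↑(f i + nsmul' S n (f i)) : WithZero S) = ↑(w + nsmul' S n w)
    rw [WithZero.coe_add, ← hw, ← ih, ← Finset.sum_add_distrib]
    exact Finset.sum_congr rfl fun i _ => WithZero.coe_add _ _

theorem hclass_idem_subgroup (f : S) (hf : f + f = f) :
    IsSubgroupSet S (HClass S f) ∧ f ∈ HClass S f ∧ ∀ y ∈ HClass S f, f + y = y := by
  have hmem : f ∈ HClass S f := ⟨Or.inl rfl, Or.inl rfl⟩
  have hid : ∀ y ∈ HClass S f, f + y = y := by
    intro y hy
    rcases hy.1 with rfl | ⟨c, rfl⟩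
    · exact hf
    · rw [← add_assoc, hf]
  refine ⟨⟨?_, f, hmem, hid, ?_⟩, hmem, hid⟩
  · intro a ha b hb
    have h := gEq_add S ha hb
    rwa [hf] at h
  · intro a ha
    rcases ha.2 with heq | ⟨c, hc⟩
    · exact ⟨f, hmem, by rw [← heq, hf]⟩
    · refine ⟨c + f, ⟨Or.inr ⟨c, add_comm c f⟩, Or.inr ⟨a, ?_⟩⟩, ?_⟩
      · calc f = f + f := hf.symm
        _ = (a + c) + f := by rw [← hc]
        _ = (c + f) + a := by rw [add_comm a c, add_assoc, add_comm a f, ← add_assoc]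
      · calc a + (c + f) = (a + c) + f := by rw [add_assoc]
        _ = f + f := by rw [← hc]
        _ = f := hf

/-- if `⟨g_1 + ⋯ + g_t⟩` is a group then `H_e` is a group with identity
`e = e(g_1) + ⋯ + e(g_t)`, and all mixed sums `Σ_{i∈I} g_i + Σ_{j∉I} e(g_j)` lie in `H_e`. -/
theorem stmt15 (S : Type*) [AddCommSemigroup S] [Fintype S] [Nonempty S]
    (t : ℕ) (g : Fin t → S) (x : S)
    (hx : (x : WithZero S) = ∑ i, (↑(g i) : WithZero S))
    (hgrp : IsSubgroupSet S (cyc S x))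
    (e : S) (he : (e : WithZero S) = ∑ i, (↑(eIdem S (g i)) : WithZero S)) :
    IsSubgroupSet S (HClass S e) ∧ e ∈ HClass S e ∧ (∀ y ∈ HClass S e, e + y = y) ∧
    ∀ (I : Finset (Fin t)) (y : S),
      (↑y : WithZero S) = (∑ i ∈ I, (↑(g i) : WithZero S)) +
        ∑ j ∈ Iᶜ, (↑(eIdem S (g j)) : WithZero S) →
      y ∈ HClass S e := by
  classical
  obtain ⟨N, hN⟩ := exists_common S g
  have hgid : ∀ i, eIdem S (g i) + eIdem S (g i) = eIdem S (g i) := fun i => eIdem_idem S (g i)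
  -- `e` is idempotent
  have heid : e + e = e := by
    apply WithZero.coe_inj.mp
    rw [WithZero.coe_add, he, ← Finset.sum_add_distrib]
    exact Finset.sum_congr rfl fun i _ => by rw [← WithZero.coe_add, hgid i]
  -- `e = (N+2) • x`, hence `e ∈ cyc x`
  have hE : e = nsmul' S (N + 1) x := by
    apply WithZero.coe_inj.mp
    rw [he]
    have h1 : ∑ i, (↑(eIdem S (g i)) : WithZero S)
        = ∑ i, (↑(nsmul' S (N + 1) (g i)) : WithZero S) :=
      Finset.sum_congr rfl fun i _ => by rw [hN i]
    rw [h1, coe_sum_nsmul' S Finset.univ g x (N + 1) hx.symm]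
  have heid' : nsmul' S (N + 1) x + nsmul' S (N + 1) x = nsmul' S (N + 1) x := by
    rw [← hE]; exact heid
  -- the identity of the group `cyc x` is `e`
  obtain ⟨-, z, hzmem, hzid, hzinv⟩ := hgrp
  have hze : z = e := by
    have hzz : z + z = z := hzid z hzmem
    obtain ⟨k, hk⟩ := hzmem
    rw [← hk] at hzz
    rw [← hk, hE]
    exact idem_unique S x k (N + 1) hzz heid'
  have hex : e + x = x := by rw [← hze]; exact hzid x ⟨0, rfl⟩
  obtain ⟨x', hx'mem, hxx'⟩ := hzinv x ⟨0, rfl⟩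
  have hxe : x + x' = e := by rw [hxx', hze]
  obtain ⟨hsub, hemem, heident⟩ := hclass_idem_subgroup S e heid
  refine ⟨hsub, hemem, heident, ?_⟩
  intro I y hy
  rcases I.eq_empty_or_nonempty with rfl | hI
  · rw [Finset.sum_empty, zero_add, Finset.compl_empty, ← he] at hy
    rw [WithZero.coe_inj.mp hy]
    exact hemem
  obtain ⟨v, hv⟩ := exists_coe_sum S I hI g
  rcases Iᶜ.eq_empty_or_nonempty with hIc | hIc
  · -- `I = univ`, so `y = x`
    have hIu : I = Finset.univ := by
      rwa [Finset.compl_eq_empty_iff] at hIc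
    have hyx : y = x := by
      apply WithZero.coe_inj.mp
      rw [hy, hIc, Finset.sum_empty, add_zero, hIu, ← hx]
    rw [hyx]
    exact ⟨Or.inr ⟨x, hex.symm⟩, Or.inr ⟨x', hxe.symm⟩⟩
  · obtain ⟨w, hw⟩ := exists_coe_sum S Iᶜ hIc g
    obtain ⟨eI, heI⟩ := exists_coe_sum S I hI (fun i => eIdem S (g i))
    have hEC : ∑ j ∈ Iᶜ, (↑(eIdem S (g j)) : WithZero S) = ↑(nsmul' S (N + 1) w) := by
      have h1 : ∑ j ∈ Iᶜ, (↑(eIdem S (g j)) : WithZero S)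
          = ∑ j ∈ Iᶜ, (↑(nsmul' S (N + 1) (g j)) : WithZero S) :=
        Finset.sum_congr rfl fun j _ => by rw [hN j]
      rw [h1, coe_sum_nsmul' S Iᶜ g w (N + 1) hw]
    have hAidem : nsmul' S (N + 1) w + nsmul' S (N + 1) w = nsmul' S (N + 1) w := by
      apply WithZero.coe_inj.mp
      rw [WithZero.coe_add, ← hEC, ← Finset.sum_add_distrib]
      exact Finset.sum_congr rfl fun j _ => by rw [← WithZero.coe_add, hgid j]
    have hxvw : x = v + w := by
      apply WithZero.coe_inj.mp
      rw [hx, ← Finset.sum_add_sum_compl I, hv, hw, WithZero.coe_add]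
    have heeq : e = eI + nsmul' S (N + 1) w := by
      apply WithZero.coe_inj.mp
      rw [he, ← Finset.sum_add_sum_compl I, heI, hEC, WithZero.coe_add]
    have hyeq : y = v + nsmul' S (N + 1) w := by
      apply WithZero.coe_inj.mp
      rw [hy, hv, hEC, WithZero.coe_add]
    have hy2 : y = x + nsmul' S N w := by
      rw [hyeq, hxvw, nsmul'_succ, ← add_assoc]
    have heA : e + nsmul' S (N + 1) w = e := by
      rw [heeq, add_assoc, hAidem]
    constructor
    · exact Or.inr ⟨x + nsmul' S N w, by rw [hy2, ← add_assoc, hex]⟩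
    · refine Or.inr ⟨x' + w, ?_⟩
      have hcalc : y + (x' + w) = e := by
        rw [hy2]
        calc x + nsmul' S N w + (x' + w)
            = (x + x') + (w + nsmul' S N w) := by
              rw [add_assoc, add_comm (nsmul' S N w) (x' + w), add_assoc x',
                ← add_assoc]
        _ = e + nsmul' S (N + 1) w := by rw [hxe, ← nsmul'_succ]
        _ = e := heA
      exact hcalc.symm


end ZS
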